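/- Let K ⊆ L be finite fields with |K| = q and [L : K] = m ≥ 2, let χ₀ be a character of Kˣ, and let B ≥ 1. Let S be the set of characters θ of Lˣ in general position with θ|_{Kˣ} = χ₀ and [ℚ(θ) : ℚ] ≤ B. Then S is stable under the Frobenius action θ ↦ θ^{(q)} (where θ^{(q)}(y) = θ(y^q)), every orbit of this action on S has exactly m elements, and consequently the number of orbits is at most f(B)/m, where f(B) is the (finite) number of complex roots of unity ζ with [ℚ(ζ) : ℚ] ≤ B. -/

import Mathlib

/-- A character `θ` of `Lˣ` is in *general position* (over `K`) if there is no proper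
intermediate field `K ⊆ E ⊊ L` and character `θ'` of `Eˣ` with `θ = θ' ∘ N_{L/E}`,
where `N_{L/E} : Lˣ → Eˣ` is the norm map. -/
def IsGeneralPosition (K : Type*) {L : Type*} [Field K] [Field L] [Algebra K L]
    (θ : Lˣ →* ℂˣ) : Prop :=
  ¬ ∃ (E : IntermediateField K L) (_ : E ≠ ⊤) (θ' : (↥E)ˣ →* ℂˣ),
      θ = θ'.comp (Units.map (Algebra.norm (↥E) : L →* ↥E))

/-- The restriction of a character `θ : Lˣ →* ℂˣ` to `Kˣ`. -/
noncomputable def charRestrict (K : Type*) {L : Type*} [Field K] [Field L] [Algebra K L]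
    (θ : Lˣ →* ℂˣ) : Kˣ →* ℂˣ :=
  θ.comp (Units.map (algebraMap K L : K →* L))

/-- `ℚ(θ)`: the subfield of `ℂ` generated by the values of a character `θ : G →* ℂˣ`. -/
noncomputable def charField {G : Type*} [Group G] (θ : G →* ℂˣ) : IntermediateField ℚ ℂ :=
  IntermediateField.adjoin ℚ (Set.range fun g => ((θ g : ℂˣ) : ℂ))

/-- `[ℚ(θ) : ℚ]`: the degree over `ℚ` of the subfield of `ℂ` generated by the values
of a character `θ`. -/
noncomputable def charDegree {G : Type*} [Group G] (θ : G →* ℂˣ) : ℕ :=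
  Module.finrank ℚ ↥(charField θ)

/-- `f(B)`: the number of complex roots of unity `ζ` with `[ℚ(ζ) : ℚ] ≤ B`. -/
noncomputable def rootsOfUnityCount (B : ℕ) : ℕ :=
  Nat.card {ζ : ℂ // (∃ n : ℕ, 1 ≤ n ∧ ζ ^ n = 1) ∧
    Module.finrank ℚ ↥(IntermediateField.adjoin ℚ {ζ}) ≤ B}

/-- The Frobenius action on characters of `Lˣ`: `θ ↦ θ^{(q)}` where `θ^{(q)} y = θ (y ^ q)`. -/
noncomputable def frobAct {L : Type*} [Field L] (q : ℕ) (θ : Lˣ →* ℂˣ) : Lˣ →* ℂˣ :=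
  θ.comp (powMonoidHom q)

/-!
The `q`-Frobenius `θ ↦ θ ∘ (y ↦ y ^ q)` satisfies `Frob^[m] = id` on all characters of `Lˣ`,
and it preserves the three conditions defining `S`: it commutes with composition by norms,
`y ^ q = y` on `Kˣ`, and `y ↦ y ^ q` is a bijection of `Lˣ`, so `θ` and its Frobenius twist take
the same values. If `θ` has Frobenius period `d < m`, let `E` be the intermediate field of degree
`d`: then `θ` kills every `v ^ (|E| - 1)`, and these form the kernel of `N_{L/E}` (Hilbert 90 for
finite fields), so `θ` factors through the surjective norm `N_{L/E}`. Hence every orbit in `S` has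
exactly `m` elements. Finally `Lˣ` is cyclic, say generated by `g`, so `θ ↦ θ g` embeds `S` into
the roots of unity `ζ` with `[ℚ(ζ) : ℚ] = [ℚ(θ) : ℚ] ≤ B`. There are finitely many of these,
since `φ(n) ≤ B` forces `n ∣ (2B)!`, and counting `S` orbit by orbit gives
`m · #orbits ≤ #S ≤ f(B)`.
-/

open Module

theorem IsCyclic.ker_powMonoidHom_eq_range {G : Type*} [CommGroup G] [IsCyclic G] [Finite G]
    {c k : ℕ} (h : c * k = Nat.card G) :
    (powMonoidHom c : G →* G).ker = (powMonoidHom k : G →* G).range := by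
  have hk : k ≠ 0 := by rintro rfl; simp at h; exact Nat.card_pos.ne' h.symm
  refine (Subgroup.eq_of_le_of_card_ge ?_ ?_).symm
  · rintro _ ⟨v, rfl⟩
    simp [← pow_mul, mul_comm k c, h, pow_card_eq_one']
  · rw [IsCyclic.card_powMonoidHom_ker, IsCyclic.card_powMonoidHom_range, ← h,
      Nat.gcd_mul_left_left, Nat.gcd_mul_right_left, Nat.mul_div_cancel _ (Nat.pos_of_ne_zero hk)]

namespace FiniteField

theorem units_pow_natCard {F : Type*} [GroupWithZero F] [Finite F] (x : Fˣ) :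
    x ^ Nat.card F = x := by
  rw [← Nat.sub_one_add_one Nat.card_pos.ne', ← Nat.card_units, pow_succ, pow_card_eq_one',
    one_mul]

section Extension

variable {K L : Type*} [Field K] [Field L] [Algebra K L] [Finite L]

theorem units_pow_natCard_pow_finrank (y : Lˣ) : y ^ Nat.card K ^ finrank K L = y := by
  have : Finite K := Finite.of_injective _ (algebraMap K L).injective
  rw [← natCard_eq_pow_finrank, units_pow_natCard]

theorem surjective_powMonoidHom_natCard :
    Function.Surjective (powMonoidHom (Nat.card K) : Lˣ →* Lˣ) := fun y =>
  ⟨y ^ Nat.card K ^ (finrank K L - 1), by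
    rw [powMonoidHom_apply, ← pow_mul, ← pow_succ, Nat.sub_one_add_one finrank_pos.ne',
      units_pow_natCard_pow_finrank]⟩

variable (K L)

theorem exists_intermediateField_finrank_eq {d : ℕ} (hd : d ∣ finrank K L) :
    ∃ E : IntermediateField K L, finrank K E = d := by
  have : Finite K := Finite.of_injective _ (algebraMap K L).injective
  have : Fintype K := Fintype.ofFinite K
  have hm : 0 < finrank K L := finrank_pos
  have hd0 : d ≠ 0 := by rintro rfl; exact hm.ne' (zero_dvd_iff.mp hd)
  let E := IntermediateField.fixedField (Subgroup.zpowers (frobeniusAlgEquivOfAlgebraic K L ^ d))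
  have hEL : finrank E L = finrank K L / d := by
    rw [IntermediateField.finrank_fixedField_eq_card, Nat.card_zpowers, orderOf_pow' _ hd0,
      orderOf_frobeniusAlgEquivOfAlgebraic, Nat.gcd_eq_right hd]
  have hquot : 0 < finrank K L / d := Nat.div_pos (Nat.le_of_dvd hm hd) (Nat.pos_of_ne_zero hd0)
  refine ⟨E, Nat.eq_of_mul_eq_mul_right hquot ?_⟩
  rw [← hEL, finrank_mul_finrank, hEL, Nat.mul_div_cancel' hd]

theorem ker_unitsMap_norm_eq_range_powMonoidHom :
    (Units.map (Algebra.norm K : L →* K)).ker =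
      (powMonoidHom (Nat.card K - 1) : Lˣ →* Lˣ).range := by
  have : Finite K := Finite.of_injective _ (algebraMap K L).injective
  have hc : (Nat.card L - 1) / (Nat.card K - 1) * (Nat.card K - 1) = Nat.card Lˣ := by
    rw [Nat.card_units, Nat.div_mul_cancel]
    rw [natCard_eq_pow_finrank (K := K) (V := L)]
    exact Nat.sub_one_dvd_pow_sub_one _ _
  rw [← IsCyclic.ker_powMonoidHom_eq_range hc]
  ext u
  simp [Units.ext_iff, ← (algebraMap K L).injective.eq_iff, algebraMap_norm_eq_pow]

theorem exists_comp_unitsMap_norm_of_comp_powMonoidHom_eq {G : Type*} [Group G] (θ : Lˣ →* G)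
    (h : θ.comp (powMonoidHom (Nat.card K)) = θ) :
    ∃ θ' : Kˣ →* G, θ = θ'.comp (Units.map (Algebra.norm K : L →* K)) := by
  have : Finite K := Finite.of_injective _ (algebraMap K L).injective
  have hker : (Units.map (Algebra.norm K : L →* K)).ker ≤ θ.ker := by
    rw [ker_unitsMap_norm_eq_range_powMonoidHom]
    rintro _ ⟨v, rfl⟩
    have hv : θ (v ^ Nat.card K) = θ v := DFunLike.congr_fun h v
    rwa [← Nat.sub_one_add_one Nat.card_pos.ne', pow_succ, map_mul, mul_eq_right] at hv
  have hN := Function.rightInverse_surjInv (unitsMap_norm_surjective K L)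
  exact ⟨_, (MonoidHom.liftOfRightInverse_comp _ _ hN ⟨θ, hker⟩).symm⟩

end Extension

end FiniteField

namespace Function

variable {α : Type*} {f : α → α} {x y : α}

def forwardOrbit (f : α → α) (x : α) : Set α := Set.range fun n : ℕ => f^[n] x

theorem ncard_forwardOrbit (hx : x ∈ periodicPts f) :
    (forwardOrbit f x).ncard = minimalPeriod f x := by
  have hrange : forwardOrbit f x = (fun n => f^[n] x) '' Set.Iio (minimalPeriod f x) := by
    refine Set.Subset.antisymm ?_ (Set.image_subset_range _ _)
    rintro _ ⟨n, rfl⟩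
    exact ⟨n % minimalPeriod f x, Nat.mod_lt _ (minimalPeriod_pos_of_mem_periodicPts hx),
      iterate_mod_minimalPeriod_eq⟩
  rw [hrange, iterate_injOn_Iio_minimalPeriod.ncard_image, ← Finset.coe_Iio, Set.ncard_coe_finset,
    Nat.card_Iio]

theorem forwardOrbit_eq_of_mem (hx : x ∈ periodicPts f) (hy : y ∈ forwardOrbit f x) :
    forwardOrbit f y = forwardOrbit f x := by
  obtain ⟨i, rfl⟩ := hy
  set p := minimalPeriod f x
  have hp : 0 < p := minimalPeriod_pos_of_mem_periodicPts hx
  refine Set.Subset.antisymm ?_ ?_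
  · rintro _ ⟨j, rfl⟩
    exact ⟨j + i, iterate_add_apply f j i x⟩
  · rintro _ ⟨j, rfl⟩
    refine ⟨j + (p - 1) * i, ?_⟩
    have hperiod : f^[i * p] x = x := ((isPeriodicPt_minimalPeriod f x).const_mul i).eq
    dsimp only
    rw [← iterate_add_apply, show j + (p - 1) * i + i = j + i * p by
      rw [add_assoc, ← Nat.succ_mul, Nat.succ_eq_add_one, Nat.sub_one_add_one hp.ne', mul_comm],
      iterate_add_apply, hperiod]

theorem mul_natCard_forwardOrbits_le {S : Set α} {m : ℕ} (hS : S.Finite) (hf : Set.MapsTo f S S)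
    (hm : ∀ x ∈ S, minimalPeriod f x = m) :
    m * Nat.card {T : Set α // ∃ x ∈ S, T = forwardOrbit f x} ≤ Nat.card S := by
  classical
  rcases m.eq_zero_or_pos with rfl | hm0
  · simp
  have hper : ∀ x ∈ S, x ∈ periodicPts f := fun x hx =>
    minimalPeriod_pos_iff_mem_periodicPts.mp (hm x hx ▸ hm0)
  have horbits : Nat.card {T : Set α // ∃ x ∈ S, T = forwardOrbit f x} =
      (hS.toFinset.image (forwardOrbit f)).card := by
    rw [← Set.ncard_coe_finset, ← Nat.card_coe_set_eq]
    congr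
    ext T
    simp [eq_comm]
  rw [horbits, Nat.card_eq_card_finite_toFinset hS]
  refine Finset.mul_card_image_le_card _ _ fun T hT => ?_
  obtain ⟨x, hx, rfl⟩ := Finset.mem_image.mp hT
  rw [Set.Finite.mem_toFinset] at hx
  calc m = (forwardOrbit f x).ncard := (hm x hx ▸ ncard_forwardOrbit (hper x hx)).symm
    _ ≤ (↑({y ∈ hS.toFinset | forwardOrbit f y = forwardOrbit f x}) : Set α).ncard := by
        refine Set.ncard_le_ncard ?_ (Finset.finite_toSet _)
        rintro _ ⟨n, rfl⟩
        simp only [Finset.coe_filter, Set.Finite.mem_toFinset, Set.mem_ofPred_eq]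
        exact ⟨hf.iterate n hx, forwardOrbit_eq_of_mem (hper x hx) ⟨n, rfl⟩⟩
    _ = _ := Set.ncard_coe_finset _

end Function

theorem Nat.dvd_factorial_of_totient_le {n B : ℕ} (hn : n ≠ 0) (h : n.totient ≤ B) :
    n ∣ (2 * B).factorial := by
  rw [← Nat.factorization_prime_le_iff_dvd hn (Nat.factorial_ne_zero _)]
  intro p hp
  rcases (n.factorization p).eq_zero_or_pos with h0 | hk
  · exact h0 ▸ Nat.zero_le _
  rw [← hp.pow_dvd_iff_le_factorization (Nat.factorial_ne_zero _)]
  refine Nat.dvd_factorial (pow_pos hp.pos _) ?_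
  calc p ^ n.factorization p = p ^ (n.factorization p - 1) * p := by
        rw [← pow_succ, Nat.sub_one_add_one hk.ne']
    _ ≤ p ^ (n.factorization p - 1) * (2 * (p - 1)) :=
        Nat.mul_le_mul_left _ (by have := hp.two_le; omega)
    _ = 2 * (p ^ n.factorization p).totient := by rw [Nat.totient_prime_pow hp hk]; ring
    _ ≤ 2 * n.totient := Nat.mul_le_mul_left _ <|
        Nat.le_of_dvd (Nat.totient_pos.2 (Nat.pos_of_ne_zero hn))
          (Nat.totient_dvd_of_dvd (Nat.ordProj_dvd n p))
    _ ≤ 2 * B := Nat.mul_le_mul_left _ h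

theorem finite_setOf_rootOfUnity_finrank_adjoin_le (F : Type*) [Field F] [CharZero F] (B : ℕ) :
    {ζ : F | (∃ n : ℕ, 1 ≤ n ∧ ζ ^ n = 1) ∧
      finrank ℚ ↥(IntermediateField.adjoin ℚ {ζ}) ≤ B}.Finite := by
  refine (Polynomial.nthRootsFinset (2 * B).factorial (1 : F)).finite_toSet.subset ?_
  rintro ζ ⟨⟨n, hn, hζ⟩, hdeg⟩
  have hpos : 0 < orderOf ζ := orderOf_pos_iff.mpr (isOfFinOrder_iff_pow_eq_one.mpr ⟨n, hn, hζ⟩)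
  have hprim := IsPrimitiveRoot.orderOf ζ
  rw [IntermediateField.adjoin.finrank ((hprim.isIntegral hpos).tower_top),
    ← Polynomial.cyclotomic_eq_minpoly_rat hprim hpos, Polynomial.natDegree_cyclotomic] at hdeg
  rw [Finset.mem_coe, Polynomial.mem_nthRootsFinset (Nat.factorial_pos _),
    ← orderOf_dvd_iff_pow_eq_one]
  exact Nat.dvd_factorial_of_totient_le hpos.ne' hdeg

theorem charField_eq_adjoin_of_forall_mem_zpowers {G : Type*} [Group G] {g : G}
    (hg : ∀ x, x ∈ Subgroup.zpowers g) (θ : G →* ℂˣ) :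
    charField θ = IntermediateField.adjoin ℚ {((θ g : ℂˣ) : ℂ)} := by
  refine le_antisymm (IntermediateField.adjoin_le_iff.mpr ?_)
    (IntermediateField.adjoin_le_iff.mpr
      (Set.singleton_subset_iff.mpr (IntermediateField.subset_adjoin ℚ _ ⟨g, rfl⟩)))
  rintro _ ⟨x, rfl⟩
  obtain ⟨k, rfl⟩ := Subgroup.mem_zpowers_iff.mp (hg x)
  simpa using zpow_mem (IntermediateField.subset_adjoin ℚ _ (Set.mem_singleton _)) k

section CyclicCharacters

variable (G : Type*) [Group G] [Finite G] [IsCyclic G] (B : ℕ)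

theorem exists_injective_charDegree_le_to_rootsOfUnity :
    ∃ e : {θ : G →* ℂˣ // charDegree θ ≤ B} → ↥{ζ : ℂ | (∃ n : ℕ, 1 ≤ n ∧ ζ ^ n = 1) ∧
      finrank ℚ ↥(IntermediateField.adjoin ℚ {ζ}) ≤ B}, Function.Injective e := by
  obtain ⟨g, hg⟩ := IsCyclic.exists_generator (α := G)
  refine ⟨fun θ => ⟨θ.1 g, ⟨Nat.card G, Nat.card_pos, ?_⟩, ?_⟩, fun θ₁ θ₂ h => ?_⟩
  · rw [← Units.val_pow_eq_pow_val, ← map_pow, pow_card_eq_one', map_one, Units.val_one]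
  · rw [← charField_eq_adjoin_of_forall_mem_zpowers hg]
    exact θ.2
  · ext x
    obtain ⟨k, rfl⟩ := Subgroup.mem_zpowers_iff.mp (hg x)
    simp only [map_zpow, Units.ext (congrArg Subtype.val h)]

theorem finite_setOf_charDegree_le : {θ : G →* ℂˣ | charDegree θ ≤ B}.Finite := by
  obtain ⟨e, he⟩ := exists_injective_charDegree_le_to_rootsOfUnity G B
  have := (finite_setOf_rootOfUnity_finrank_adjoin_le ℂ B).to_subtype
  exact Set.finite_coe_iff.mp (Finite.of_injective e he)

theorem natCard_setOf_charDegree_le_le :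
    Nat.card {θ : G →* ℂˣ | charDegree θ ≤ B} ≤ rootsOfUnityCount B := by
  obtain ⟨e, he⟩ := exists_injective_charDegree_le_to_rootsOfUnity G B
  have := (finite_setOf_rootOfUnity_finrank_adjoin_le ℂ B).to_subtype
  exact (Nat.card_le_card_of_injective e he).trans_eq rfl

end CyclicCharacters

theorem frobAct_iterate {L : Type*} [Field L] (q i : ℕ) (θ : Lˣ →* ℂˣ) :
    (frobAct q)^[i] θ = θ.comp (powMonoidHom (q ^ i)) := by
  induction i with
  | zero => ext; simp
  | succ i ih =>
    rw [Function.iterate_succ_apply', ih]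
    ext y
    simp [frobAct, ← pow_mul, pow_succ']

theorem charRestrict_frobAct {K L : Type*} [Field K] [Field L] [Algebra K L] [Finite K]
    (θ : Lˣ →* ℂˣ) : charRestrict K (frobAct (Nat.card K) θ) = charRestrict K θ := by
  ext x
  simp [charRestrict, frobAct, ← map_pow, FiniteField.units_pow_natCard]

section Frobenius

variable {K L : Type*} [Field K] [Field L] [Algebra K L] [Finite L]

theorem isPeriodicPt_frobAct (θ : Lˣ →* ℂˣ) :
    Function.IsPeriodicPt (frobAct (Nat.card K)) (finrank K L) θ := by
  rw [Function.IsPeriodicPt, Function.IsFixedPt, frobAct_iterate]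
  ext y
  simp [FiniteField.units_pow_natCard_pow_finrank]

theorem charDegree_frobAct (θ : Lˣ →* ℂˣ) :
    charDegree (frobAct (Nat.card K) θ) = charDegree θ := by
  have hrange := (FiniteField.surjective_powMonoidHom_natCard (K := K)).range_comp
    fun y => ((θ y : ℂˣ) : ℂ)
  unfold charDegree charField
  rw [← hrange]
  rfl

theorem isGeneralPosition_frobAct {θ : Lˣ →* ℂˣ} (hθ : IsGeneralPosition K θ) :
    IsGeneralPosition K (frobAct (Nat.card K) θ) := by
  rintro ⟨E, hE, θ', hθ'⟩
  refine hθ ⟨E, hE, θ'.comp (powMonoidHom (Nat.card K ^ (finrank K L - 1))), ?_⟩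
  calc θ = (frobAct (Nat.card K))^[finrank K L - 1] (frobAct (Nat.card K) θ) := by
        rw [← Function.iterate_succ_apply, Nat.succ_eq_add_one,
          Nat.sub_one_add_one finrank_pos.ne', (isPeriodicPt_frobAct (K := K) θ).eq]
    _ = _ := by
        rw [hθ', frobAct_iterate]
        ext y
        simp

theorem not_isGeneralPosition_of_comp_powMonoidHom_eq {θ : Lˣ →* ℂˣ} {d : ℕ}
    (hd : d ∣ finrank K L) (hdm : d < finrank K L)
    (h : θ.comp (powMonoidHom (Nat.card K ^ d)) = θ) : ¬ IsGeneralPosition K θ := by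
  have : Finite K := Finite.of_injective _ (algebraMap K L).injective
  obtain ⟨E, hE⟩ := FiniteField.exists_intermediateField_finrank_eq K L hd
  have hcard : Nat.card E = Nat.card K ^ d := hE ▸ natCard_eq_pow_finrank
  obtain ⟨θ', hθ'⟩ :=
    FiniteField.exists_comp_unitsMap_norm_of_comp_powMonoidHom_eq E L θ (hcard ▸ h)
  refine fun hθ => hθ ⟨E, fun htop => ?_, θ', hθ'⟩
  rw [htop, IntermediateField.finrank_top'] at hE
  exact hdm.ne' hE

theorem minimalPeriod_frobAct {θ : Lˣ →* ℂˣ} (hθ : IsGeneralPosition K θ) :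
    Function.minimalPeriod (frobAct (Nat.card K)) θ = finrank K L := by
  have hdvd := (isPeriodicPt_frobAct (K := K) θ).minimalPeriod_dvd
  refine (Nat.le_of_dvd finrank_pos hdvd).eq_or_lt.resolve_right fun hlt => ?_
  refine not_isGeneralPosition_of_comp_powMonoidHom_eq hdvd hlt ?_ hθ
  rw [← frobAct_iterate, Function.iterate_minimalPeriod]

end Frobenius

theorem frobenius_orbits_on_bounded_degree_characters_general
    (K L : Type*) [Field K] [Field L] [Fintype K] [Fintype L] [Algebra K L]
    (q m : ℕ) (hq : Fintype.card K = q) (hm : Module.finrank K L = m)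
    (χ₀ : Kˣ →* ℂˣ) (B : ℕ)
    (S : Set (Lˣ →* ℂˣ))
    (hS : S = {θ | IsGeneralPosition K θ ∧ charRestrict K θ = χ₀ ∧ charDegree θ ≤ B}) :
    (∀ θ ∈ S, frobAct q θ ∈ S) ∧
    (∀ θ ∈ S, (Set.range fun i : ℕ => (frobAct q (L := L))^[i] θ).ncard = m) ∧
    (Nat.card {T : Set (Lˣ →* ℂˣ) //
        ∃ θ ∈ S, T = Set.range fun i : ℕ => (frobAct q (L := L))^[i] θ} : ℝ) ≤
      (rootsOfUnityCount B : ℝ) / m := by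
  rw [Fintype.card_eq_nat_card] at hq
  subst hq hm
  have hmaps : Set.MapsTo (frobAct (Nat.card K)) S S := by
    rw [hS]
    exact fun θ ⟨hθ, hres, hdeg⟩ => ⟨isGeneralPosition_frobAct hθ,
      (charRestrict_frobAct θ).trans hres, (charDegree_frobAct θ).trans_le hdeg⟩
  have hperiod : ∀ θ ∈ S, Function.minimalPeriod (frobAct (Nat.card K)) θ = finrank K L := by
    rw [hS]
    exact fun θ hθ => minimalPeriod_frobAct hθ.1
  have hbounded : S ⊆ {θ | charDegree θ ≤ B} := by
    rw [hS]
    exact fun θ hθ => hθ.2.2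
  refine ⟨hmaps, fun θ hθ => (hperiod θ hθ) ▸ Function.ncard_forwardOrbit ?_, ?_⟩
  · exact Function.mk_mem_periodicPts finrank_pos (isPeriodicPt_frobAct θ)
  rw [le_div_iff₀ (by exact_mod_cast finrank_pos), mul_comm]
  have hfinite := finite_setOf_charDegree_le Lˣ B
  have hcount := Function.mul_natCard_forwardOrbits_le (hfinite.subset hbounded) hmaps hperiod
  exact_mod_cast hcount.trans
    ((Nat.card_mono hfinite hbounded).trans (natCard_setOf_charDegree_le_le Lˣ B))

/-- Let `K ⊆ L` be finite fields with `|K| = q` and `[L : K] = m ≥ 2`, let `χ₀` be a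
character of `Kˣ`, and let `B ≥ 1`.  Let `S` be the set of characters `θ` of `Lˣ` in
general position with `θ|_{Kˣ} = χ₀` and `[ℚ(θ) : ℚ] ≤ B`.  Then `S` is stable under the
Frobenius action `θ ↦ θ^{(q)}`, every orbit of this action on `S` has exactly `m`
elements, and consequently the number of orbits is at most `f(B)/m`. -/
theorem frobenius_orbits_on_bounded_degree_characters
    (K L : Type*) [Field K] [Field L] [Fintype K] [Fintype L] [Algebra K L]
    (q m : ℕ) (hq : Fintype.card K = q) (hm : Module.finrank K L = m) (hm2 : 2 ≤ m)
    (χ₀ : Kˣ →* ℂˣ) (B : ℕ) (hB : 1 ≤ B)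
    (S : Set (Lˣ →* ℂˣ))
    (hS : S = {θ | IsGeneralPosition K θ ∧ charRestrict K θ = χ₀ ∧ charDegree θ ≤ B}) :
    (∀ θ ∈ S, frobAct q θ ∈ S) ∧
    (∀ θ ∈ S, (Set.range fun i : ℕ => (frobAct q (L := L))^[i] θ).ncard = m) ∧
    (Nat.card {T : Set (Lˣ →* ℂˣ) //
        ∃ θ ∈ S, T = Set.range fun i : ℕ => (frobAct q (L := L))^[i] θ} : ℝ) ≤
      (rootsOfUnityCount B : ℝ) / m :=
  frobenius_orbits_on_bounded_degree_characters_general K L q m hq hm χ₀ B S hS
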